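/- Let S₁, S₂ be self-adjoint operators in H, p ∈ [1,∞], and m ∈ ℕ. If (S₂ - z)^{-m} - (S₁ - z)^{-m} ∈ B_p(H) for all z ∈ ℂ \ ℝ, then (S₂ - z)^{-n} - (S₁ - z)^{-n} ∈ B_p(H) for all z ∈ ℂ \ ℝ and all n ≥ m. -/

import Mathlib

open scoped ENNReal

/-- The `n`-th approximation number of a bounded operator `T` on a Hilbert space:
the distance from `T` to operators of rank at most `n`.  For compact operators on a
Hilbert space these coincide with the singular values. -/
noncomputable def approxNumber {H : Type*} [NormedAddCommGroup H] [InnerProductSpace ℂ H]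
    (n : ℕ) (T : H →L[ℂ] H) : ℝ :=
  sInf {c : ℝ | ∃ F : H →L[ℂ] H,
    FiniteDimensional ℂ (LinearMap.range (F : H →ₗ[ℂ] H)) ∧
    Module.finrank ℂ (LinearMap.range (F : H →ₗ[ℂ] H)) ≤ n ∧ c = ‖T - F‖}

/-- Membership in the Schatten class `B_p(H)` for `p ∈ [1,∞]` (`p : ℝ≥0∞`):
for `p = ∞` this is compactness, and for finite `p` it additionally requires the
summability of the `p`-th powers of the approximation numbers (= singular values). -/
def MemSchattenE {H : Type*} [NormedAddCommGroup H] [InnerProductSpace ℂ H]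
    (p : ℝ≥0∞) (T : H →L[ℂ] H) : Prop :=
  IsCompactOperator T ∧ (p ≠ ⊤ → Summable (fun n => approxNumber n T ^ p.toReal))

/-!
Write `Rⱼ(z) = (Sⱼ - z)⁻¹`. Instead of a contour integral we shift the spectral parameter: for
`w = z - s` the resolvent identity gives `Rⱼ(z) = (1 + s Rⱼ(z)) Rⱼ(w)`, hence
`(1 + s R₁(z))ⁿ (R₂(w)ⁿ - R₁(w)ⁿ) (1 + s R₂(z))ⁿ = (1 + s R₁(z))ⁿ R₂(z)ⁿ - R₁(z)ⁿ (1 + s R₂(z))ⁿ`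
lies in the two-sided ideal `B_p(H)` for infinitely many `s`. The right side is a polynomial of
degree `≤ n` in `s`, so all its coefficients lie in `B_p(H)`; the linear one is
`n (R₁ R₂ⁿ - R₁ⁿ R₂)`, and `R₂ⁿ⁺¹ - R₁ⁿ⁺¹ = (R₂ⁿ - R₁ⁿ) R₂ - (R₁ R₂ⁿ - R₁ⁿ R₂) + R₁ (R₂ⁿ - R₁ⁿ)`.
Induction on `n` concludes.
-/

open Module LinearMap

section ApproxNumber

variable {H : Type*} [NormedAddCommGroup H] [InnerProductSpace ℂ H] {n : ℕ}

def RankLE (n : ℕ) (F : H →L[ℂ] H) : Prop :=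
  FiniteDimensional ℂ (range (F : H →ₗ[ℂ] H)) ∧ finrank ℂ (range (F : H →ₗ[ℂ] H)) ≤ n

lemma RankLE.of_range_le {F : H →L[ℂ] H} {W : Submodule ℂ H} [FiniteDimensional ℂ W]
    (hW : finrank ℂ W ≤ n) (hFW : range (F : H →ₗ[ℂ] H) ≤ W) : RankLE n F :=
  ⟨Submodule.finiteDimensional_of_le hFW, (Submodule.finrank_mono hFW).trans hW⟩

lemma rankLE_zero (n : ℕ) : RankLE n (0 : H →L[ℂ] H) :=
  .of_range_le (W := ⊥) (by simp) (by rw [ContinuousLinearMap.toLinearMap_zero, range_zero])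

lemma approxNumber_le_norm_sub {T F : H →L[ℂ] H} (hF : RankLE n F) :
    approxNumber n T ≤ ‖T - F‖ :=
  csInf_le ⟨0, by rintro _ ⟨F, -, -, rfl⟩; positivity⟩ ⟨F, hF.1, hF.2, rfl⟩

lemma le_approxNumber {T : H →L[ℂ] H} {c : ℝ} (h : ∀ F, RankLE n F → c ≤ ‖T - F‖) :
    c ≤ approxNumber n T :=
  le_csInf ⟨_, 0, (rankLE_zero n).1, (rankLE_zero n).2, rfl⟩
    (by rintro _ ⟨F, hF, hFn, rfl⟩; exact h F ⟨hF, hFn⟩)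

lemma approxNumber_nonneg (n : ℕ) (T : H →L[ℂ] H) : 0 ≤ approxNumber n T :=
  le_approxNumber fun _ _ => norm_nonneg _

lemma approxNumber_antitone (T : H →L[ℂ] H) : Antitone fun n => approxNumber n T :=
  fun _ _ hnm => le_approxNumber fun _ hF => approxNumber_le_norm_sub ⟨hF.1, hF.2.trans hnm⟩

lemma approxNumber_zero_right (n : ℕ) : approxNumber n (0 : H →L[ℂ] H) = 0 :=
  le_antisymm (by simpa using approxNumber_le_norm_sub (T := (0 : H →L[ℂ] H)) (rankLE_zero n))
    (approxNumber_nonneg n 0)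

lemma le_mul_approxNumber_add {A : H →L[ℂ] H} {x K b : ℝ} (hK : 0 ≤ K)
    (h : ∀ F, RankLE n F → x ≤ K * ‖A - F‖ + b) : x ≤ K * approxNumber n A + b := by
  rcases hK.eq_or_lt with rfl | hK
  · simpa using h 0 (rankLE_zero n)
  have : (x - b) / K ≤ approxNumber n A := le_approxNumber fun F hF => by
    rw [div_le_iff₀' hK]
    linarith [h F hF]
  rw [div_le_iff₀' hK] at this
  linarith

lemma approxNumber_mul_mul_le (C A D : H →L[ℂ] H) (n : ℕ) :
    approxNumber n (C * A * D) ≤ ‖C‖ * ‖D‖ * approxNumber n A := by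
  simpa using le_mul_approxNumber_add (b := 0) (by positivity) fun F hF => by
    have hCFD : RankLE n (C * F * D) := by
      have := hF.1
      refine .of_range_le ((Submodule.finrank_map_le (C : H →ₗ[ℂ] H) _).trans hF.2) ?_
      rintro _ ⟨y, rfl⟩
      exact ⟨F (D y), ⟨D y, rfl⟩, rfl⟩
    calc approxNumber n (C * A * D) ≤ ‖C * A * D - C * F * D‖ := approxNumber_le_norm_sub hCFD
      _ = ‖C * (A - F) * D‖ := by rw [mul_sub, sub_mul]
      _ ≤ ‖C‖ * ‖A - F‖ * ‖D‖ := norm_mul₃_le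
      _ = ‖C‖ * ‖D‖ * ‖A - F‖ + 0 := by ring

lemma approxNumber_add_le (A B : H →L[ℂ] H) (n₁ n₂ : ℕ) :
    approxNumber (n₁ + n₂) (A + B) ≤ approxNumber n₁ A + approxNumber n₂ B := by
  have hF (G : H →L[ℂ] H) (hG : RankLE n₂ G) :
      approxNumber (n₁ + n₂) (A + B) ≤ 1 * approxNumber n₁ A + ‖B - G‖ :=
    le_mul_approxNumber_add zero_le_one fun F hF => by
      have := hF.1; have := hG.1
      have hFG : RankLE (n₁ + n₂) (F + G) :=
        .of_range_le ((Submodule.finrank_add_le_finrank_add_finrank _ _).trans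
          (add_le_add hF.2 hG.2)) (range_add_le (F : H →ₗ[ℂ] H) G)
      calc approxNumber (n₁ + n₂) (A + B) ≤ ‖A + B - (F + G)‖ := approxNumber_le_norm_sub hFG
        _ = ‖(A - F) + (B - G)‖ := by rw [add_sub_add_comm]
        _ ≤ 1 * ‖A - F‖ + ‖B - G‖ := by simpa using norm_add_le _ _
  have := le_mul_approxNumber_add (A := B) (x := approxNumber (n₁ + n₂) (A + B)) (K := 1)
    (b := approxNumber n₁ A) zero_le_one fun G hG => by linarith [hF G hG]
  linarith

end ApproxNumber

lemma Real.add_rpow_le_two_rpow_mul {x y q : ℝ} (hx : 0 ≤ x) (hy : 0 ≤ y) (hq : 0 ≤ q) :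
    (x + y) ^ q ≤ 2 ^ q * (x ^ q + y ^ q) := by
  have hmax : 0 ≤ max x y := le_max_of_le_left hx
  calc (x + y) ^ q ≤ (2 * max x y) ^ q :=
        Real.rpow_le_rpow (by positivity) (by linarith [le_max_left x y, le_max_right x y]) hq
    _ = 2 ^ q * max x y ^ q := Real.mul_rpow zero_le_two hmax
    _ ≤ 2 ^ q * (x ^ q + y ^ q) := by
        gcongr
        rcases max_cases x y with ⟨h, -⟩ | ⟨h, -⟩ <;> rw [h] <;>
          linarith [Real.rpow_nonneg hx q, Real.rpow_nonneg hy q]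

section Schatten

variable {H : Type*} [NormedAddCommGroup H] [InnerProductSpace ℂ H] {p : ℝ≥0∞}

lemma memSchattenE_zero (hp : p ≠ 0) : MemSchattenE p (0 : H →L[ℂ] H) := by
  refine ⟨isCompactOperator_zero, fun hp_top => ?_⟩
  simp only [approxNumber_zero_right, Real.zero_rpow (ENNReal.toReal_pos hp hp_top).ne']
  exact summable_zero

lemma MemSchattenE.mul_mul {A : H →L[ℂ] H} (hA : MemSchattenE p A) (C D : H →L[ℂ] H) :
    MemSchattenE p (C * A * D) := by
  refine ⟨(hA.1.comp_clm D).clm_comp C, fun hp_top => ?_⟩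
  refine .of_nonneg_of_le (fun k => Real.rpow_nonneg (approxNumber_nonneg _ _) _) (fun k => ?_)
    ((hA.2 hp_top).mul_left ((‖C‖ * ‖D‖) ^ p.toReal))
  rw [← Real.mul_rpow (by positivity) (approxNumber_nonneg k A)]
  exact Real.rpow_le_rpow (approxNumber_nonneg k _) (approxNumber_mul_mul_le C A D k) (by positivity)

/-- The approximation numbers of `A + B` at indices `2k` and `2k + 1` are controlled by those of
`A` and `B` at index `k`. -/
lemma MemSchattenE.add {A B : H →L[ℂ] H} (hA : MemSchattenE p A) (hB : MemSchattenE p B) :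
    MemSchattenE p (A + B) := by
  refine ⟨hA.1.add hB.1, fun hp_top => ?_⟩
  set q := p.toReal
  have hq : 0 ≤ q := ENNReal.toReal_nonneg
  have hbound (k : ℕ) : approxNumber (2 * k) (A + B) ^ q ≤
      2 ^ q * (approxNumber k A ^ q + approxNumber k B ^ q) :=
    calc approxNumber (2 * k) (A + B) ^ q ≤ (approxNumber k A + approxNumber k B) ^ q :=
          Real.rpow_le_rpow (approxNumber_nonneg _ _) (two_mul k ▸ approxNumber_add_le A B k k) hq
      _ ≤ _ := Real.add_rpow_le_two_rpow_mul (approxNumber_nonneg _ _) (approxNumber_nonneg _ _) hq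
  have hsum := ((hA.2 hp_top).add (hB.2 hp_top)).mul_left (2 ^ q)
  have hnonneg (k : ℕ) := Real.rpow_nonneg (approxNumber_nonneg k (A + B)) q
  refine .even_add_odd (.of_nonneg_of_le (fun k => hnonneg _) hbound hsum)
    (.of_nonneg_of_le (fun k => hnonneg _) (fun k => le_trans ?_ (hbound k)) hsum)
  exact Real.rpow_le_rpow (approxNumber_nonneg _ _) (approxNumber_antitone _ (Nat.le_succ _)) hq

def schattenIdeal (p : ℝ≥0∞) (hp : p ≠ 0) : TwoSidedIdeal (H →L[ℂ] H) :=
  .mk' {A | MemSchattenE p A} (memSchattenE_zero hp) .add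
    (fun hA => by simpa using hA.mul_mul (-1) 1)
    (fun hA => by simpa using hA.mul_mul _ 1) (fun hA => by simpa using hA.mul_mul 1 _)

lemma mem_schattenIdeal {hp : p ≠ 0} {A : H →L[ℂ] H} :
    A ∈ schattenIdeal p hp ↔ MemSchattenE p A :=
  TwoSidedIdeal.mem_mk' ..

end Schatten

open Polynomial in
lemma Submodule.mem_of_forall_sum_pow_smul_mem {K M : Type*} [Field K] [AddCommGroup M]
    [Module K M] (N : Submodule K M) {S : Set K} (hS : S.Infinite) {n : ℕ} (c : ℕ → M)
    (h : ∀ s ∈ S, ∑ k ∈ Finset.range (n + 1), s ^ k • c k ∈ N) {k : ℕ} (hk : k ≤ n) :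
    c k ∈ N := by
  rw [← Submodule.Quotient.mk_eq_zero]
  refine (Module.forall_dual_apply_eq_zero_iff K _).mp fun φ => ?_
  set P : K[X] := ∑ j ∈ Finset.range (n + 1), C (φ (N.mkQ (c j))) * X ^ j
  have hP : P = 0 := P.eq_zero_of_infinite_isRoot <| hS.mono fun s hs => by
    have : φ (N.mkQ (∑ k ∈ Finset.range (n + 1), s ^ k • c k)) = 0 := by
      rw [N.mkQ_apply, (Submodule.Quotient.mk_eq_zero N).mpr (h s hs), map_zero]
    show P.IsRoot s
    simp only [IsRoot.def, P, eval_finsetSum, eval_mul, eval_C, eval_pow, eval_X]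
    simpa only [map_sum, map_smul, smul_eq_mul, mul_comm] using this
  simpa [P, finsetSum_coeff, coeff_C_mul_X_pow, Nat.lt_succ_of_le hk]
    using congr_arg (coeff · k) hP

section Resolvent

variable {K R : Type*} [Field K] [Ring R] [Algebra K R]

lemma one_add_smul_pow_mul_sub_eq_sum (s : K) (x y : R) (n : ℕ) :
    (1 + s • y) ^ n * x ^ n - y ^ n * (1 + s • x) ^ n =
      ∑ k ∈ Finset.range (n + 1),
        s ^ k • ((n.choose k : K) • (y ^ k * x ^ n - y ^ n * x ^ k)) := by
  rw [add_comm 1, add_comm 1, (Commute.one_right _).add_pow, (Commute.one_right _).add_pow,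
    Finset.sum_mul, Finset.mul_sum, ← Finset.sum_sub_distrib]
  refine Finset.sum_congr rfl fun k _ => ?_
  simp only [one_pow, mul_one, ← nsmul_eq_mul', ← Nat.cast_smul_eq_nsmul K,
    smul_pow, smul_mul_assoc, mul_smul_comm, smul_sub, smul_smul, mul_comm]

lemma commute_one_add_smul_inverse_sub_smul_one (a : R) (z w s : K) :
    Commute (1 + s • Ring.inverse (a - z • 1)) (Ring.inverse (a - w • 1)) := by
  have hzw : Commute (a - z • 1) (a - w • 1) := by
    simp only [← Algebra.algebraMap_eq_smul_one]
    exact ((Commute.refl a).sub_right (Algebra.commutes w a).symm).sub_left (Algebra.commutes z _)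
  exact (Commute.one_left _).add_left (hzw.ringInverse_ringInverse.smul_left s)

lemma inverse_sub_smul_one_eq_mul {a : R} {z w : K} (hz : IsUnit (a - z • 1))
    (hw : IsUnit (a - w • 1)) :
    Ring.inverse (a - z • 1) =
      (1 + (z - w) • Ring.inverse (a - z • 1)) * Ring.inverse (a - w • 1) := by
  have : 1 + (z - w) • Ring.inverse (a - z • 1) = Ring.inverse (a - z • 1) * (a - w • 1) := by
    rw [show a - w • (1 : R) = (a - z • 1) + (z - w) • 1 by module, mul_add,
      Ring.inverse_mul_cancel _ hz, mul_smul_one]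
  rw [this, mul_assoc, Ring.mul_inverse_cancel _ hw, mul_one]

theorem TwoSidedIdeal.inverse_sub_smul_one_pow_succ_sub_mem [CharZero K] (I : TwoSidedIdeal R)
    {a₁ a₂ : R} {U : Set K} (hU : U.Infinite) (ha₁ : ∀ w ∈ U, IsUnit (a₁ - w • 1))
    (ha₂ : ∀ w ∈ U, IsUnit (a₂ - w • 1)) {n : ℕ} (hn : n ≠ 0)
    (h : ∀ w ∈ U, Ring.inverse (a₂ - w • 1) ^ n - Ring.inverse (a₁ - w • 1) ^ n ∈ I)
    {z : K} (hz : z ∈ U) :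
    Ring.inverse (a₂ - z • 1) ^ (n + 1) - Ring.inverse (a₁ - z • 1) ^ (n + 1) ∈ I := by
  set x := Ring.inverse (a₂ - z • 1)
  set y := Ring.inverse (a₁ - z • 1)
  set N : Submodule K R := I.asIdeal.restrictScalars K
  have hmem {r : R} : r ∈ N ↔ r ∈ I := TwoSidedIdeal.mem_asIdeal
  have hshift : ∀ w ∈ U, ∑ k ∈ Finset.range (n + 1),
      (z - w) ^ k • ((n.choose k : K) • (y ^ k * x ^ n - y ^ n * x ^ k)) ∈ N := by
    intro w hw
    have hc₁ := commute_one_add_smul_inverse_sub_smul_one a₁ z w (z - w)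
    have hc₂ := commute_one_add_smul_inverse_sub_smul_one a₂ z w (z - w)
    have hy : y ^ n = (1 + (z - w) • y) ^ n * Ring.inverse (a₁ - w • 1) ^ n := by
      rw [← hc₁.mul_pow, ← inverse_sub_smul_one_eq_mul (ha₁ z hz) (ha₁ w hw)]
    have hx : x ^ n = Ring.inverse (a₂ - w • 1) ^ n * (1 + (z - w) • x) ^ n := by
      rw [← hc₂.symm.mul_pow, ← hc₂.eq, ← inverse_sub_smul_one_eq_mul (ha₂ z hz) (ha₂ w hw)]
    have := I.mul_mem_right _ ((1 + (z - w) • x) ^ n)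
      (I.mul_mem_left ((1 + (z - w) • y) ^ n) _ (h w hw))
    rw [hmem, ← one_add_smul_pow_mul_sub_eq_sum, hy, hx]
    rwa [mul_sub, sub_mul, mul_assoc] at this
  have hlin : y * x ^ n - y ^ n * x ∈ N := by
    have := N.mem_of_forall_sum_pow_smul_mem (hU.image sub_right_injective.injOn) _
      (Set.forall_mem_image.mpr hshift) (Nat.one_le_iff_ne_zero.mpr hn)
    simpa [hn] using N.smul_mem (n : K)⁻¹ this
  have hx_sub_y := h z hz
  rw [show x ^ (n + 1) - y ^ (n + 1) =
      (x ^ n - y ^ n) * x - (y * x ^ n - y ^ n * x) + y * (x ^ n - y ^ n) by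
    rw [pow_succ, pow_succ']; noncomm_ring]
  exact I.add_mem (I.sub_mem (I.mul_mem_right _ _ hx_sub_y) (hmem.mp hlin))
    (I.mul_mem_left _ _ hx_sub_y)

end Resolvent

lemma IsSelfAdjoint.isUnit_sub_smul_one {A : Type*} [CStarAlgebra A] {a : A}
    (ha : IsSelfAdjoint a) {z : ℂ} (hz : z.im ≠ 0) : IsUnit (a - z • 1) := by
  have := spectrum.notMem_iff.mp fun hmem => hz (ha.im_eq_zero_of_mem_spectrum hmem)
  rwa [← neg_sub, IsUnit.neg_iff, Algebra.algebraMap_eq_smul_one] at this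

lemma Complex.infinite_setOf_im_ne_zero : {z : ℂ | z.im ≠ 0}.Infinite :=
  Set.infinite_of_injective_forall_mem (f := fun n : ℕ => I + n)
    ((add_right_injective I).comp Nat.cast_injective) (by simp)

/-- If `S₁, S₂` are self-adjoint and `(S₂ - z)^{-m} - (S₁ - z)^{-m} ∈ B_p(H)` for all
`z ∈ ℂ \ ℝ`, then `(S₂ - z)^{-n} - (S₁ - z)^{-n} ∈ B_p(H)` for all `z ∈ ℂ \ ℝ` and `n ≥ m`. -/
theorem memSchatten_resolvent_power_of_memSchatten
    {H : Type*} [NormedAddCommGroup H] [InnerProductSpace ℂ H] [CompleteSpace H]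
    (S₁ S₂ : H →L[ℂ] H) (hS₁ : IsSelfAdjoint S₁) (hS₂ : IsSelfAdjoint S₂)
    (p : ℝ≥0∞) (hp : 1 ≤ p) (m : ℕ) (hm : 1 ≤ m)
    (h : ∀ z : ℂ, z.im ≠ 0 →
      MemSchattenE p (Ring.inverse (S₂ - z • (1 : H →L[ℂ] H)) ^ m -
        Ring.inverse (S₁ - z • (1 : H →L[ℂ] H)) ^ m)) :
    ∀ z : ℂ, z.im ≠ 0 → ∀ n : ℕ, m ≤ n →
      MemSchattenE p (Ring.inverse (S₂ - z • (1 : H →L[ℂ] H)) ^ n -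
        Ring.inverse (S₁ - z • (1 : H →L[ℂ] H)) ^ n) := by
  intro z hz n hn
  set I := schattenIdeal (H := H) p (one_pos.trans_le hp).ne'
  induction n, hn using Nat.le_induction generalizing z with
  | base => exact h z hz
  | succ n hmn ih =>
    exact mem_schattenIdeal.mp <| I.inverse_sub_smul_one_pow_succ_sub_mem
      Complex.infinite_setOf_im_ne_zero (fun _ => hS₁.isUnit_sub_smul_one)
      (fun _ => hS₂.isUnit_sub_smul_one) (by omega) (fun w hw => mem_schattenIdeal.mpr (ih w hw))
      hz
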